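/- arXiv:1904.13109 — 2 statements merged into one kernel-verified Lean document; each statement's English description precedes it below -/
import Mathlib

section
/- For every integer n ≥ 1 there exists a constant C = C(n) > 0 such that for all integers μ ≥ 1 and k ≥ 1 the following hold: if k < μ then binom(n+k, n) ≤ μ·k^{n−1}/(n−1)! + C·k^{n−2}, and if k ≥ μ then binom(n+k, n) − binom(n+k−μ, n) ≤ μ·k^{n−1}/(n−1)! + C·k^{n−2}. -/
/-!
Pascal's rule telescopes `binom(n+k, n) - binom(n+k-μ, n)` into the sum of the `μ`
coefficients `binom(n-1+k-j, n-1)`, `j < μ`, each at most `(n-1+k-j)^(n-1)/(n-1)!`.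
For `j ≥ n-1` this is at most `k^(n-1)/(n-1)!`; each of the at most `n-1` other terms
exceeds that by `O(k^(n-2))`, because `(k+a)^r - k^r ≤ r a (k+a)^(r-1)`. When `k < μ`,
`binom(n+k, n)` is the telescoped sum with `k+1` terms, since `binom(n-1, n) = 0`.
-/

open Finset Nat

theorem Nat.choose_eq_choose_sub_add_sum_range (N r : ℕ) {m : ℕ} (hm : m ≤ N) :
    N.choose (r + 1) = (N - m).choose (r + 1) + ∑ j ∈ range m, (N - 1 - j).choose r := by
  induction m with
  | zero => simp
  | succ m ih =>
    rw [ih (by omega), sum_range_succ, show N - m = N - (m + 1) + 1 by omega,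
      Nat.choose_succ_succ', show N - 1 - m = N - (m + 1) by omega]
    ring

section OrderedRing

variable {α : Type*} [CommRing α] [LinearOrder α] [IsStrictOrderedRing α]

theorem add_pow_sub_pow_le {x a : α} (hx : 1 ≤ x) (ha : 0 ≤ a) (r : ℕ) :
    (x + a) ^ r - x ^ r ≤ a * r * (1 + a) ^ (r - 1) * x ^ (r - 1) := by
  have hx0 : 0 ≤ x := zero_le_one.trans hx
  calc (x + a) ^ r - x ^ r ≤ |(x + a) - x| * r * max |x + a| |x| ^ (r - 1) :=
        (le_abs_self _).trans (abs_pow_sub_pow_le ..)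
    _ = a * r * (x + a) ^ (r - 1) := by
        rw [add_sub_cancel_left, abs_of_nonneg ha, abs_of_nonneg (by positivity),
          abs_of_nonneg hx0, max_eq_left (by linarith)]
    _ ≤ a * r * ((1 + a) * x) ^ (r - 1) := by gcongr; nlinarith
    _ = a * r * (1 + a) ^ (r - 1) * x ^ (r - 1) := by rw [mul_pow]; ring

end OrderedRing

section OrderedField

variable {α : Type*} [Field α] [LinearOrder α] [IsStrictOrderedRing α]

theorem choose_add_sub_le (r k j : ℕ) :
    ((r + k - j).choose r : α) ≤
      ((k : α) ^ r + if j < r then ((k : α) + r) ^ r - (k : α) ^ r else 0) / r ! := by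
  refine (choose_le_pow_div r _).trans (div_le_div_of_nonneg_right ?_ (by positivity))
  split_ifs with hj
  · rw [add_sub_cancel]
    gcongr
    exact_mod_cast (by omega : r + k - j ≤ k + r)
  · rw [add_zero]
    gcongr
    exact_mod_cast (by omega : r + k - j ≤ k)

theorem sum_range_choose_add_sub_le (r k μ : ℕ) :
    ∑ j ∈ range μ, ((r + k - j).choose r : α) ≤
      (μ * (k : α) ^ r + r * (((k : α) + r) ^ r - (k : α) ^ r)) / r ! := by
  set D : α := ((k : α) + r) ^ r - (k : α) ^ r
  have hD : 0 ≤ D := sub_nonneg.2 (by gcongr; simp)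
  have hfew : ∑ j ∈ range μ, (if j < r then D else 0) ≤ r * D := by
    rw [← sum_filter, sum_const, nsmul_eq_mul]
    gcongr
    calc #{j ∈ range μ | j < r} ≤ #(range r) := by gcongr; intro j; simp
      _ = r := card_range r
  calc ∑ j ∈ range μ, ((r + k - j).choose r : α)
      ≤ ∑ j ∈ range μ, ((k : α) ^ r + if j < r then D else 0) / r ! :=
        sum_le_sum fun j _ ↦ choose_add_sub_le r k j
    _ = (μ * (k : α) ^ r + ∑ j ∈ range μ, (if j < r then D else 0)) / r ! := by
        rw [← sum_div, sum_add_distrib, sum_const, card_range, nsmul_eq_mul]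
    _ ≤ (μ * (k : α) ^ r + r * D) / r ! := by gcongr

end OrderedField

theorem natCast_mul_pow_sub_one_eq_rpow (r : ℕ) (x : ℝ) :
    (r : ℝ) * x ^ (r - 1) = r * x ^ ((r : ℝ) - 1) := by
  rcases r with _ | r
  · simp
  · rw [Nat.add_sub_cancel, ← Real.rpow_natCast]
    push_cast
    ring_nf

theorem choose_sub_choose_le (r k m : ℕ) (hk : 1 ≤ k) (hm : m ≤ r + 1 + k) :
    ((r + 1 + k).choose (r + 1) : ℝ) - (r + 1 + k - m).choose (r + 1) ≤
      m * (k : ℝ) ^ r / r ! + r ^ 3 * (1 + r) ^ (r - 1) * (k : ℝ) ^ ((r : ℝ) - 1) := by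
  have hsum := Nat.choose_eq_choose_sub_add_sum_range (r + 1 + k) r hm
  rw [show r + 1 + k - 1 = r + k by omega] at hsum
  rw [hsum, cast_add, add_sub_cancel_left, cast_sum]
  have hk' : (1 : ℝ) ≤ k := by exact_mod_cast hk
  calc ∑ j ∈ range m, ((r + k - j).choose r : ℝ)
      ≤ m * (k : ℝ) ^ r / r ! + r * (((k : ℝ) + r) ^ r - (k : ℝ) ^ r) / r ! := by
        rw [← add_div]; exact sum_range_choose_add_sub_le r k m
    _ ≤ m * (k : ℝ) ^ r / r ! + r * (((k : ℝ) + r) ^ r - (k : ℝ) ^ r) := by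
        gcongr
        refine div_le_self (mul_nonneg (cast_nonneg r) (sub_nonneg.2 ?_))
          (one_le_cast.2 r.factorial_pos)
        gcongr; simp
    _ ≤ m * (k : ℝ) ^ r / r ! + r * (r * r * (1 + r) ^ (r - 1) * (k : ℝ) ^ (r - 1)) := by
        gcongr
        exact add_pow_sub_pow_le hk' (cast_nonneg r) r
    _ = m * (k : ℝ) ^ r / r ! + r ^ 2 * (1 + r) ^ (r - 1) * (r * (k : ℝ) ^ (r - 1)) := by ring
    _ = m * (k : ℝ) ^ r / r ! + r ^ 3 * (1 + r) ^ (r - 1) * (k : ℝ) ^ ((r : ℝ) - 1) := by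
        rw [natCast_mul_pow_sub_one_eq_rpow]; ring

/-- **Hilbert function estimate for the tangent cone of a hypersurface.** For every
`n ≥ 1` there is a constant `C = C(n) > 0` such that for all integers `μ ≥ 1` and
`k ≥ 1`: if `k < μ` then `binom(n+k,n) ≤ μ·k^(n-1)/(n-1)! + C·k^(n-2)`, and if
`k ≥ μ` then `binom(n+k,n) - binom(n+k-μ,n) ≤ μ·k^(n-1)/(n-1)! + C·k^(n-2)`. -/
theorem hilbert_function_estimate (n : ℕ) (hn : 1 ≤ n) :
    ∃ C : ℝ, 0 < C ∧
      ∀ (μ k : ℕ), 1 ≤ μ → 1 ≤ k →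
        (k < μ →
          ((n + k).choose n : ℝ) ≤
            (μ : ℝ) * (k : ℝ) ^ ((n : ℝ) - 1) / (n - 1).factorial +
              C * (k : ℝ) ^ ((n : ℝ) - 2)) ∧
        (μ ≤ k →
          ((n + k).choose n : ℝ) - ((n + k - μ).choose n : ℝ) ≤
            (μ : ℝ) * (k : ℝ) ^ ((n : ℝ) - 1) / (n - 1).factorial +
              C * (k : ℝ) ^ ((n : ℝ) - 2)) := by
  obtain ⟨r, rfl⟩ : ∃ r, n = r + 1 := ⟨n - 1, by omega⟩
  have hC : (r : ℝ) ^ 3 * (1 + r) ^ (r - 1) ≤ (1 + r) ^ (r + 3) :=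
    calc (r : ℝ) ^ 3 * (1 + r) ^ (r - 1) ≤ (1 + r) ^ 3 * (1 + r) ^ (r - 1) := by
          gcongr; linarith
      _ = (1 + r : ℝ) ^ (r - 1 + 3) := by ring
      _ ≤ (1 + r : ℝ) ^ (r + 3) := pow_le_pow_right₀ (by simp) (by omega)
  refine ⟨(1 + r) ^ (r + 3), by positivity, fun μ k _ hk ↦ ?_⟩
  rw [show ((r + 1 : ℕ) : ℝ) - 1 = r by push_cast; ring, Real.rpow_natCast, Nat.add_sub_cancel,
    show ((r + 1 : ℕ) : ℝ) - 2 = r - 1 by push_cast; ring]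
  have key (m : ℕ) (hm : m ≤ r + 1 + k) :
      ((r + 1 + k).choose (r + 1) : ℝ) - (r + 1 + k - m).choose (r + 1) ≤
        m * (k : ℝ) ^ r / r ! + (1 + r) ^ (r + 3) * (k : ℝ) ^ ((r : ℝ) - 1) :=
    (choose_sub_choose_le r k m hk hm).trans (by gcongr)
  refine ⟨fun hkμ ↦ ?_, fun hμk ↦ key μ (by omega)⟩
  have hfull := key (k + 1) (by omega)
  rw [show r + 1 + k - (k + 1) = r by omega, choose_eq_zero_of_lt (lt_add_one r), cast_zero,
    sub_zero] at hfull
  refine hfull.trans (by gcongr; exact_mod_cast hkμ)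
end

section
/- For each pair of integers d ≥ 1 and n ≥ 2, there exists a polynomial f ∈ ℚ[x_1,…,x_n] of degree exactly d, irreducible over the algebraic closure of ℚ, which vanishes at every point (r_1,…,r_n) ∈ ℤ^n satisfying |r_i| ≤ ⌊(d−1)/(2n)⌋ for all i. -/
open Polynomial Finset

namespace LBC

noncomputable section

variable (K : Type*) [Field K]

def Ig (m : ℕ) : Finset ℤ := Finset.Icc (-(m : ℤ)) m

lemma card_Ig (m : ℕ) : (Ig m).card = 2 * m + 1 := by
  simp only [Ig, Int.card_Icc]
  omega

lemma zero_mem_Ig (m : ℕ) : (0 : ℤ) ∈ Ig m := by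
  simp only [Ig, Finset.mem_Icc]
  omega

def P (m : ℕ) : K[X] := ∏ k ∈ Ig m, (X - C (k : K))

lemma P_monic (m : ℕ) : (P K m).Monic :=
  monic_prod_of_monic _ _ fun _ _ => monic_X_sub_C _

lemma P_natDegree (m : ℕ) : (P K m).natDegree = 2 * m + 1 := by
  rw [P, natDegree_prod_of_monic _ _ fun _ _ => monic_X_sub_C _]
  simp only [natDegree_X_sub_C, Finset.sum_const, smul_eq_mul, mul_one, card_Ig]

lemma eval_P (m : ℕ) (x : K) : (P K m).eval x = ∏ k ∈ Ig m, (x - (k : K)) := by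
  simp [P, eval_prod]

lemma P_coeff_zero (m : ℕ) : (P K m).coeff 0 = 0 := by
  rw [coeff_zero_eq_eval_zero, eval_P]
  exact Finset.prod_eq_zero (zero_mem_Ig m) (by simp)

lemma aeval_P {A : Type*} [CommRing A] [Algebra K A] (m : ℕ) (x : A) :
    Polynomial.aeval x (P K m) = ∏ k ∈ Ig m, (x - algebraMap K A (k : K)) := by
  simp [P, map_prod, map_sub, Polynomial.aeval_X, Polynomial.aeval_C]

def bK (m : ℕ) : K := (m : K) + 1

lemma eval_P_b [CharZero K] (m : ℕ) : (P K m).eval (bK K m) ≠ 0 := by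
  rw [eval_P]
  refine Finset.prod_ne_zero_iff.mpr fun k hk => ?_
  simp only [Ig, Finset.mem_Icc] at hk
  have h1 : bK K m - (k : K) = (((m : ℤ) + 1 - k : ℤ) : K) := by
    simp only [bK]; push_cast; ring
  rw [h1]
  exact_mod_cast (by omega : ((m : ℤ) + 1 - k : ℤ) ≠ 0)

def cK (m : ℕ) : K := ((P K m).eval (bK K m))⁻¹

lemma cK_mul [CharZero K] (m : ℕ) : cK K m * (P K m).eval (bK K m) = 1 :=
  inv_mul_cancel₀ (eval_P_b K m)

def f (N m s : ℕ) : MvPolynomial (Fin (N + 2)) K :=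
  (Polynomial.aeval (MvPolynomial.X 0) (P K m))
    - MvPolynomial.C (cK K m) * (Polynomial.aeval (MvPolynomial.X 1) (P K m))
        * (Polynomial.aeval (MvPolynomial.X 0) (P K m) - MvPolynomial.X 0 ^ (2 * m + 1))
    + (Polynomial.aeval (MvPolynomial.X 1) (P K m))
        * (MvPolynomial.X 1 - MvPolynomial.C (bK K m)) * MvPolynomial.X 1 ^ s


-- map lemmas
variable {K}
lemma map_P (g : ℚ →+* K) (m : ℕ) : (P ℚ m).map g = P K m := by
  simp [P, Polynomial.map_prod, Polynomial.map_sub, map_X, map_C, map_intCast]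

lemma map_bK (g : ℚ →+* K) (m : ℕ) : g (bK ℚ m) = bK K m := by
  simp only [bK, map_add, map_natCast, map_one]

lemma map_evalPb (g : ℚ →+* K) (m : ℕ) : g ((P ℚ m).eval (bK ℚ m)) = (P K m).eval (bK K m) := by
  rw [← map_P g m, ← map_bK g m, Polynomial.eval_map, Polynomial.eval₂_at_apply]

lemma map_cK (g : ℚ →+* K) (m : ℕ) : g (cK ℚ m) = cK K m := by
  rw [cK, cK, map_inv₀, map_evalPb]

lemma map_aevalP (g : ℚ →+* K) {nn : ℕ} (m : ℕ) (i : Fin nn) :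
    MvPolynomial.map g (Polynomial.aeval (MvPolynomial.X i) (P ℚ m))
      = Polynomial.aeval (MvPolynomial.X i) (P K m) := by
  rw [aeval_P, aeval_P, map_prod]
  simp [MvPolynomial.algebraMap_eq, map_intCast]

lemma map_f (g : ℚ →+* K) (N m s : ℕ) :
    MvPolynomial.map g (f ℚ N m s) = f K N m s := by
  simp only [f, map_add, map_sub, map_mul, map_pow, MvPolynomial.map_X, MvPolynomial.map_C,
    map_aevalP, map_cK, map_bK]

-- evaluation at grid points
lemma eval_aevalP_zero {nn : ℕ} (m : ℕ) (r : Fin nn → ℤ) (i : Fin nn) (h : |r i| ≤ (m : ℤ)) :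
    MvPolynomial.eval (fun j => (r j : ℚ)) (Polynomial.aeval (MvPolynomial.X i) (P ℚ m)) = 0 := by
  rw [aeval_P, map_prod]
  refine Finset.prod_eq_zero (i := r i) ?_ ?_
  · simp only [Ig, Finset.mem_Icc]
    rw [abs_le] at h
    omega
  · simp [MvPolynomial.algebraMap_eq]

lemma eval_f_zero (N m s : ℕ) (r : Fin (N + 2) → ℤ) (hr : ∀ i, |r i| ≤ (m : ℤ)) :
    MvPolynomial.eval (fun i => (r i : ℚ)) (f ℚ N m s) = 0 := by
  simp only [f, map_add, map_sub, map_mul, map_pow]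
  rw [eval_aevalP_zero m r 0 (hr 0), eval_aevalP_zero m r 1 (hr 1)]
  ring


-- degree lemmas
lemma totalDegree_aevalP_le {nn : ℕ} (p : ℚ[X]) (i : Fin nn) :
    (Polynomial.aeval (MvPolynomial.X i) p : MvPolynomial (Fin nn) ℚ).totalDegree
      ≤ p.natDegree := by
  rw [Polynomial.aeval_def, Polynomial.eval₂_eq_sum, Polynomial.sum_def]
  refine (MvPolynomial.totalDegree_finset_sum _ _).trans (Finset.sup_le fun j hj => ?_)
  refine (MvPolynomial.totalDegree_mul _ _).trans ?_
  have h1 : (algebraMap ℚ (MvPolynomial (Fin nn) ℚ) (p.coeff j)).totalDegree = 0 := by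
    rw [MvPolynomial.algebraMap_eq, MvPolynomial.totalDegree_C]
  have h2 : ((MvPolynomial.X i : MvPolynomial (Fin nn) ℚ) ^ j).totalDegree = j :=
    MvPolynomial.totalDegree_X_pow _ _
  rw [h1, h2, zero_add]
  exact Polynomial.le_natDegree_of_mem_supp _ hj

lemma natDegree_aeval_le {nn : ℕ} (g : Fin nn → ℚ[X]) (hg : ∀ i, (g i).natDegree ≤ 1)
    (q : MvPolynomial (Fin nn) ℚ) :
    (MvPolynomial.aeval (R := ℚ) g q).natDegree ≤ q.totalDegree := by
  conv_lhs => rw [← MvPolynomial.support_sum_monomial_coeff q]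
  rw [map_sum]
  refine Polynomial.natDegree_sum_le_of_forall_le _ _ fun a ha => ?_
  rw [MvPolynomial.aeval_monomial]
  refine Polynomial.natDegree_mul_le.trans ?_
  have h1 : (algebraMap ℚ ℚ[X] (MvPolynomial.coeff a q)).natDegree = 0 := by
    rw [Polynomial.algebraMap_eq]; exact Polynomial.natDegree_C _
  rw [h1, zero_add, Finsupp.prod]
  refine (Polynomial.natDegree_prod_le _ _).trans ?_
  have h2 : ∑ i ∈ a.support, ((g i) ^ (a i)).natDegree ≤ ∑ i ∈ a.support, a i := by
    refine Finset.sum_le_sum fun i _ => Polynomial.natDegree_pow_le.trans ?_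
    calc a i * (g i).natDegree ≤ a i * 1 := Nat.mul_le_mul_left _ (hg i)
      _ = a i := Nat.mul_one _
  refine h2.trans ?_
  exact MvPolynomial.le_totalDegree ha


lemma natDegree_P_sub_le (m : ℕ) :
    ((P ℚ m) - Polynomial.X ^ (2 * m + 1)).natDegree ≤ 2 * m := by
  by_cases hz : (P ℚ m) - Polynomial.X ^ (2 * m + 1) = 0
  · rw [hz]; simp
  have hdeg : (P ℚ m).degree = ((2 * m + 1 : ℕ) : WithBot ℕ) := by
    rw [Polynomial.degree_eq_natDegree (P_monic ℚ m).ne_zero, P_natDegree]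
  have hlt : ((P ℚ m) - Polynomial.X ^ (2 * m + 1)).degree < (P ℚ m).degree := by
    refine Polynomial.degree_sub_lt ?_ (P_monic ℚ m).ne_zero ?_
    · rw [hdeg, Polynomial.degree_X_pow]
    · rw [(P_monic ℚ m).leadingCoeff, Polynomial.leadingCoeff_X_pow]
  rw [hdeg] at hlt
  exact Nat.lt_succ_iff.mp ((Polynomial.natDegree_lt_iff_degree_lt hz).mpr hlt)

lemma aevalP_sub (nn m : ℕ) (i : Fin nn) :
    (Polynomial.aeval (MvPolynomial.X i) (P ℚ m) : MvPolynomial (Fin nn) ℚ)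
        - MvPolynomial.X i ^ (2 * m + 1)
      = Polynomial.aeval (MvPolynomial.X i) ((P ℚ m) - Polynomial.X ^ (2 * m + 1)) := by
  rw [map_sub, map_pow, Polynomial.aeval_X]

lemma totalDegree_f (N m s : ℕ) (hms : 2 * m ≤ s + 1) :
    (f ℚ N m s).totalDegree = 2 * m + 2 + s := by
  have hD : 2 * m + 1 ≤ 2 * m + 2 + s := by omega
  refine le_antisymm ?_ ?_
  · -- upper bound
    refine (MvPolynomial.totalDegree_add _ _).trans (max_le ?_ ?_)
    · refine (MvPolynomial.totalDegree_sub _ _).trans (max_le ?_ ?_)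
      · exact ((totalDegree_aevalP_le _ _).trans_eq (P_natDegree ℚ m)).trans hD
      · refine (MvPolynomial.totalDegree_mul _ _).trans ?_
        have h1 : (MvPolynomial.C (cK ℚ m) * (Polynomial.aeval (MvPolynomial.X 1) (P ℚ m))
            : MvPolynomial (Fin (N+2)) ℚ).totalDegree ≤ 2 * m + 1 := by
          refine (MvPolynomial.totalDegree_mul _ _).trans ?_
          rw [MvPolynomial.totalDegree_C, zero_add]
          exact (totalDegree_aevalP_le _ _).trans_eq (P_natDegree ℚ m)
        have h2 : ((Polynomial.aeval (MvPolynomial.X 0) (P ℚ m) : MvPolynomial (Fin (N+2)) ℚ)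
            - MvPolynomial.X 0 ^ (2 * m + 1)).totalDegree ≤ 2 * m := by
          rw [aevalP_sub]
          exact (totalDegree_aevalP_le _ _).trans (natDegree_P_sub_le m)
        calc _ ≤ (2 * m + 1) + (2 * m) := Nat.add_le_add h1 h2
          _ ≤ 2 * m + 2 + s := by omega
    · refine (MvPolynomial.totalDegree_mul _ _).trans ?_
      have h3 : ((MvPolynomial.X 1 : MvPolynomial (Fin (N+2)) ℚ) ^ s).totalDegree = s :=
        MvPolynomial.totalDegree_X_pow _ _
      have h4 : ((Polynomial.aeval (MvPolynomial.X 1) (P ℚ m) : MvPolynomial (Fin (N+2)) ℚ)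
          * (MvPolynomial.X 1 - MvPolynomial.C (bK ℚ m))).totalDegree ≤ 2 * m + 2 := by
        refine (MvPolynomial.totalDegree_mul _ _).trans ?_
        have h5 : ((MvPolynomial.X 1 : MvPolynomial (Fin (N+2)) ℚ)
            - MvPolynomial.C (bK ℚ m)).totalDegree ≤ 1 := by
          refine (MvPolynomial.totalDegree_sub _ _).trans (max_le ?_ ?_)
          · exact le_of_eq (MvPolynomial.totalDegree_X _)
          · simp [MvPolynomial.totalDegree_C]
        calc _ ≤ (2 * m + 1) + 1 :=
              Nat.add_le_add ((totalDegree_aevalP_le _ _).trans_eq (P_natDegree ℚ m)) h5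
          _ = 2 * m + 2 := by omega
      calc _ ≤ (2 * m + 2) + s := by rw [h3]; exact Nat.add_le_add_right h4 s
        _ = 2 * m + 2 + s := rfl
  · -- lower bound via the substitution x₀ ↦ 0, x₁ ↦ X
    set g : Fin (N + 2) → ℚ[X] := fun i => if i = 1 then Polynomial.X else 0 with hg
    have hg1 : ∀ i, (g i).natDegree ≤ 1 := by
      intro i; by_cases h : i = 1 <;> simp [hg, h]
    have key : MvPolynomial.aeval (R := ℚ) g (f ℚ N m s)
        = (P ℚ m) * (Polynomial.X - Polynomial.C (bK ℚ m)) * Polynomial.X ^ s := by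
      have e0 : MvPolynomial.aeval (R := ℚ) g (MvPolynomial.X (0 : Fin (N+2))) = 0 := by
        rw [MvPolynomial.aeval_X, hg]
        simp
      have e1 : MvPolynomial.aeval (R := ℚ) g (MvPolynomial.X (1 : Fin (N+2)))
          = Polynomial.X := by
        rw [MvPolynomial.aeval_X, hg]; simp
      have eu : MvPolynomial.aeval (R := ℚ) g
          (Polynomial.aeval (MvPolynomial.X (0 : Fin (N+2))) (P ℚ m)) = 0 := by
        rw [← Polynomial.aeval_algHom_apply, e0, Polynomial.aeval_def,
          Polynomial.eval₂_at_zero, P_coeff_zero, map_zero]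
      have ev : MvPolynomial.aeval (R := ℚ) g
          (Polynomial.aeval (MvPolynomial.X (1 : Fin (N+2))) (P ℚ m)) = P ℚ m := by
        rw [← Polynomial.aeval_algHom_apply, e1, Polynomial.aeval_X_left_apply]
      simp only [f, map_add, map_sub, map_mul, map_pow, eu, ev, e0, e1,
        MvPolynomial.aeval_C, Polynomial.algebraMap_eq]
      rw [zero_pow (by omega : 2 * m + 1 ≠ 0)]
      ring
    have := natDegree_aeval_le g hg1 (f ℚ N m s)
    rw [key] at this
    refine le_trans (le_of_eq ?_) this
    have hmon : ((P ℚ m) * (Polynomial.X - Polynomial.C (bK ℚ m))).Monic :=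
      (P_monic ℚ m).mul (Polynomial.monic_X_sub_C _)
    rw [hmon.natDegree_mul (Polynomial.monic_X_pow s),
      (P_monic ℚ m).natDegree_mul (Polynomial.monic_X_sub_C _), P_natDegree,
      Polynomial.natDegree_X_sub_C, Polynomial.natDegree_X_pow]


-- irreducibility
section Irred

variable [CharZero K]

lemma aeval_X_map {A : Type*} [CommRing A] [Algebra K A] (p : K[X]) :
    Polynomial.aeval (Polynomial.X : A[X]) p = p.map (algebraMap K A) := by
  rw [Polynomial.aeval_def]; rfl

lemma aeval_C_poly {A : Type*} [CommRing A] [Algebra K A] (x : A) (p : K[X]) :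
    Polynomial.aeval (Polynomial.C x : A[X]) p = Polynomial.C (Polynomial.aeval x p) := by
  simpa using Polynomial.aeval_algHom_apply (Polynomial.CAlgHom (R := K) (A := A)) x p

lemma aeval_poly_eval (x : K) (p : K[X]) : Polynomial.aeval x p = p.eval x := by
  rw [Polynomial.aeval_def, Algebra.algebraMap_self]; rfl

lemma algHom_aevalP {A : Type*} [CommRing A] [Algebra K A] (ψ : A →ₐ[K] K) (x : A) (m : ℕ) :
    ψ (Polynomial.aeval x (P K m)) = (P K m).eval (ψ x) := by
  rw [← Polynomial.aeval_algHom_apply, aeval_poly_eval]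

lemma bK_ne_zero (m : ℕ) : bK K m ≠ 0 := by
  have : ((m + 1 : ℕ) : K) ≠ 0 := Nat.cast_ne_zero.mpr (Nat.succ_ne_zero m)
  simpa [bK] using this

lemma irreducible_X0 (N : ℕ) : Irreducible (MvPolynomial.X 0 : MvPolynomial (Fin (N + 2)) K) := by
  rw [← MulEquiv.irreducible_iff (MvPolynomial.finSuccEquiv K (N + 1)),
    MvPolynomial.finSuccEquiv_X_zero]
  exact Polynomial.prime_X.irreducible

lemma irreducible_f (N m s : ℕ) : Irreducible (f K N m s) := by
  classical
  set R' := MvPolynomial (Fin (N + 1)) K with hR'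
  rw [← MulEquiv.irreducible_iff (MvPolynomial.finSuccEquiv K (N + 1))]
  set y : R' := MvPolynomial.X 0 with hy
  set w : R' := Polynomial.aeval y (P K m) with hw
  set a : R' := MvPolynomial.C (cK K m) * w with ha
  set e : R' := w * (y - MvPolynomial.C (bK K m)) * y ^ s with he
  set PR : Polynomial R' := (P K m).map (algebraMap K R') with hPR
  have hCphi : ∀ x : K, (MvPolynomial.finSuccEquiv K (N + 1)) (MvPolynomial.C x)
      = Polynomial.C (MvPolynomial.C x) := by
    intro x
    have h1 : (MvPolynomial.C x : MvPolynomial (Fin (N+2)) K) = algebraMap K _ x := rfl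
    rw [h1, AlgEquiv.commutes, Polynomial.algebraMap_apply, MvPolynomial.algebraMap_eq]
  have hX1 : (MvPolynomial.finSuccEquiv K (N + 1)) (MvPolynomial.X 1) = Polynomial.C y := by
    rw [← Fin.succ_zero_eq_one, MvPolynomial.finSuccEquiv_X_succ, hy]
  have hu : (MvPolynomial.finSuccEquiv K (N + 1))
      (Polynomial.aeval (MvPolynomial.X 0) (P K m)) = PR := by
    rw [← Polynomial.aeval_algHom_apply, MvPolynomial.finSuccEquiv_X_zero, aeval_X_map, hPR]
  have hv : (MvPolynomial.finSuccEquiv K (N + 1))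
      (Polynomial.aeval (MvPolynomial.X 1) (P K m)) = Polynomial.C w := by
    rw [← Polynomial.aeval_algHom_apply, hX1, aeval_C_poly, hw]
  have hFeq : (MvPolynomial.finSuccEquiv K (N + 1)) (f K N m s)
      = PR - Polynomial.C a * (PR - Polynomial.X ^ (2 * m + 1)) + Polynomial.C e := by
    simp only [f, map_add, map_sub, map_mul, map_pow, hu, hv, hCphi, hX1,
      MvPolynomial.finSuccEquiv_X_zero]
    rw [ha, he]
    push_cast [map_mul, map_pow, map_sub]
    ring
  rw [hFeq]
  -- Eisenstein's criterion at the prime (y - bK)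
  have hprime : Prime (y - MvPolynomial.C (bK K m)) := by
    have h2 : (MvPolynomial.finSuccEquiv K N) (y - MvPolynomial.C (bK K m))
        = Polynomial.X - Polynomial.C (MvPolynomial.C (bK K m)) := by
      rw [map_sub, hy, MvPolynomial.finSuccEquiv_X_zero]
      congr 1
      have h1 : (MvPolynomial.C (bK K m) : R') = algebraMap K _ (bK K m) := rfl
      rw [h1, AlgEquiv.commutes, Polynomial.algebraMap_apply, MvPolynomial.algebraMap_eq]
    exact comap_prime (MvPolynomial.finSuccEquiv K N) (MvPolynomial.finSuccEquiv K N).symm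
      (fun a => AlgEquiv.symm_apply_apply _ a) (h2 ▸ Polynomial.prime_X_sub_C _)
  have hyb_ne : y - MvPolynomial.C (bK K m) ≠ 0 := hprime.ne_zero
  set P' : Ideal R' := Ideal.span {y - MvPolynomial.C (bK K m)} with hP'
  have hP : P'.IsPrime := (Ideal.span_singleton_prime hyb_ne).mpr hprime
  -- the evaluation homomorphism sending every variable to bK
  set ψ : R' →ₐ[K] K := MvPolynomial.aeval (R := K) (fun _ : Fin (N + 1) => bK K m) with hψ
  have hψyb : ψ (y - MvPolynomial.C (bK K m)) = 0 := by
    rw [map_sub, hy, hψ, MvPolynomial.aeval_X, MvPolynomial.aeval_C, Algebra.algebraMap_self,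
      RingHom.id_apply, sub_self]
  have hψw : ψ w = (P K m).eval (bK K m) := by
    rw [hw, algHom_aevalP, hy, hψ, MvPolynomial.aeval_X]
  have hndvd_w : ¬ (y - MvPolynomial.C (bK K m)) ∣ w := by
    rintro ⟨t, ht⟩
    apply eval_P_b K m
    rw [← hψw, ht, map_mul, hψyb, zero_mul]
  have hndvd_y : ¬ (y - MvPolynomial.C (bK K m)) ∣ y := by
    rintro ⟨t, ht⟩
    apply bK_ne_zero (K := K) m
    have : ψ y = bK K m := by rw [hy, hψ, MvPolynomial.aeval_X]
    rw [← this, ht, map_mul, hψyb, zero_mul]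
  -- key divisibility
  have hPReval_y : PR.eval y = w := by
    rw [hPR, Polynomial.eval_map, hw, Polynomial.aeval_def]
  have hPReval_b : PR.eval (MvPolynomial.C (bK K m)) = MvPolynomial.C ((P K m).eval (bK K m)) := by
    rw [hPR, Polynomial.eval_map, ← MvPolynomial.algebraMap_eq, Polynomial.eval₂_at_apply,
      MvPolynomial.algebraMap_eq]
  have hdvd1 : (y - MvPolynomial.C (bK K m)) ∣ (1 - a) := by
    have h3 : (y - MvPolynomial.C (bK K m)) ∣ (w - MvPolynomial.C ((P K m).eval (bK K m))) := by
      rw [← hPReval_y, ← hPReval_b]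
      exact Polynomial.sub_dvd_eval_sub _ _ _
    have h4 : 1 - a = MvPolynomial.C (cK K m)
        * (MvPolynomial.C ((P K m).eval (bK K m)) - w) := by
      rw [mul_sub, ← map_mul, cK_mul, map_one, ha]
    rw [h4]
    refine Dvd.dvd.mul_left ?_ _
    have h5 := (dvd_neg (α := R')).mpr h3
    rwa [neg_sub] at h5
  have h1a : (1 - a) ∈ P' := Ideal.mem_span_singleton.mpr hdvd1
  have he_mem : e ∈ P' := Ideal.mem_span_singleton.mpr ⟨w * y ^ s, by rw [he]; ring⟩
  -- coefficients of F
  have hPRD : PR.coeff (2 * m + 1) = 1 := by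
    have h5 : (P K m).coeff (2 * m + 1) = 1 := by
      have h6 := (P_monic K m).coeff_natDegree
      rwa [P_natDegree] at h6
    rw [hPR, Polynomial.coeff_map, h5, map_one]
  have hPR0 : PR.coeff 0 = 0 := by
    rw [hPR, Polynomial.coeff_map, P_coeff_zero, map_zero]
  have hcoeff : ∀ j, (PR - Polynomial.C a * (PR - Polynomial.X ^ (2 * m + 1))
      + Polynomial.C e).coeff j
      = (1 - a) * PR.coeff j + (if j = 2 * m + 1 then a else 0)
        + (if j = 0 then e else 0) := by
    intro j
    rw [Polynomial.coeff_add, Polynomial.coeff_sub, Polynomial.coeff_C_mul,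
      Polynomial.coeff_sub, Polynomial.coeff_X_pow, Polynomial.coeff_C]
    split_ifs <;> ring
  have hcoeffD : (PR - Polynomial.C a * (PR - Polynomial.X ^ (2 * m + 1))
      + Polynomial.C e).coeff (2 * m + 1) = 1 := by
    rw [hcoeff, hPRD, if_pos rfl, if_neg (by omega)]
    ring
  have hFne : (PR - Polynomial.C a * (PR - Polynomial.X ^ (2 * m + 1)) + Polynomial.C e) ≠ 0 := by
    intro h
    rw [h, Polynomial.coeff_zero] at hcoeffD
    exact one_ne_zero hcoeffD.symm
  have hFndle : (PR - Polynomial.C a * (PR - Polynomial.X ^ (2 * m + 1))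
      + Polynomial.C e).natDegree ≤ 2 * m + 1 := by
    have hPRnd : PR.natDegree = 2 * m + 1 := by
      rw [hPR, (P_monic K m).natDegree_map, P_natDegree]
    refine (Polynomial.natDegree_add_le _ _).trans (max_le ?_ ?_)
    · refine (Polynomial.natDegree_sub_le _ _).trans (max_le hPRnd.le ?_)
      refine (Polynomial.natDegree_mul_le).trans ?_
      rw [Polynomial.natDegree_C, zero_add]
      exact (Polynomial.natDegree_sub_le _ _).trans
        (max_le hPRnd.le (Polynomial.natDegree_X_pow _).le)
    · simp
  have hFnd : (PR - Polynomial.C a * (PR - Polynomial.X ^ (2 * m + 1))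
      + Polynomial.C e).natDegree = 2 * m + 1 :=
    le_antisymm hFndle (Polynomial.le_natDegree_of_ne_zero (by rw [hcoeffD]; exact one_ne_zero))
  have hFdeg : (PR - Polynomial.C a * (PR - Polynomial.X ^ (2 * m + 1))
      + Polynomial.C e).degree = ((2 * m + 1 : ℕ) : WithBot ℕ) := by
    rw [Polynomial.degree_eq_natDegree hFne, hFnd]
  have hFlc : (PR - Polynomial.C a * (PR - Polynomial.X ^ (2 * m + 1))
      + Polynomial.C e).leadingCoeff = 1 := by
    rw [Polynomial.leadingCoeff, hFnd, hcoeffD]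
  refine Polynomial.irreducible_of_eisenstein_criterion hP ?_ ?_ ?_ ?_ ?_
  · rw [hFlc]
    intro hmem
    exact hP.ne_top ((Ideal.eq_top_iff_one _).mpr hmem)
  · intro j hj
    rw [hFdeg, Nat.cast_lt] at hj
    rw [hcoeff, if_neg (by omega), add_zero]
    refine Ideal.add_mem _ (Ideal.mul_mem_right _ _ h1a) ?_
    split_ifs
    · exact he_mem
    · exact Ideal.zero_mem _
  · rw [hFdeg]
    exact_mod_cast Nat.succ_pos (2 * m)
  · rw [hcoeff, hPR0, if_neg (by omega), if_pos rfl, mul_zero, zero_add, zero_add]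
    intro hmem
    rw [hP', Ideal.span_singleton_pow, Ideal.mem_span_singleton] at hmem
    obtain ⟨t, ht⟩ := hmem
    have h7 : (y - MvPolynomial.C (bK K m)) * (w * y ^ s)
        = (y - MvPolynomial.C (bK K m)) * ((y - MvPolynomial.C (bK K m)) * t) := by
      rw [he] at ht
      linear_combination ht
    have h8 : (y - MvPolynomial.C (bK K m)) ∣ w * y ^ s :=
      ⟨t, mul_left_cancel₀ hyb_ne h7⟩
    rcases hprime.2.2 _ _ h8 with h9 | h9
    · exact hndvd_w h9
    · exact hndvd_y (hprime.dvd_of_dvd_pow h9)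
  · exact (Polynomial.monic_of_natDegree_le_of_coeff_eq_one _ hFndle hcoeffD).isPrimitive

end Irred

end

end LBC



/-- **Construction for the lower bounds.** For each pair of integers `d ≥ 1`, `n ≥ 2`
there is a polynomial `f ∈ ℚ[x_1,…,x_n]` of degree exactly `d`, irreducible over the
algebraic closure of `ℚ`, which vanishes at every integer point `(r_1,…,r_n)` with
`|r_i| ≤ ⌊(d−1)/(2n)⌋` for all `i`. -/
theorem lower_bound_construction (d n : ℕ) (hd : 1 ≤ d) (hn : 2 ≤ n) :
    ∃ f : MvPolynomial (Fin n) ℚ,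
      f.totalDegree = d ∧
      Irreducible (MvPolynomial.map (algebraMap ℚ (AlgebraicClosure ℚ)) f) ∧
      ∀ r : Fin n → ℤ, (∀ i, |r i| ≤ (((d - 1) / (2 * n) : ℕ) : ℤ)) →
        MvPolynomial.eval (fun i => (r i : ℚ)) f = 0 := by
  obtain ⟨N, rfl⟩ : ∃ N, n = N + 2 := ⟨n - 2, by omega⟩
  set m : ℕ := (d - 1) / (2 * (N + 2)) with hm
  rcases eq_or_lt_of_le hd with hd1 | hd2
  · -- degree 1 case
    have hm0 : m = 0 := by rw [hm, ← hd1]; simp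
    refine ⟨MvPolynomial.X 0, ?_, ?_, ?_⟩
    · rw [MvPolynomial.totalDegree_X]; omega
    · rw [MvPolynomial.map_X]
      exact LBC.irreducible_X0 (K := AlgebraicClosure ℚ) N
    · intro r hr
      have h0 : r 0 = 0 := by
        have h1 := hr 0
        rw [hm0] at h1
        simpa using abs_nonpos_iff.mp (by exact_mod_cast h1)
      rw [MvPolynomial.eval_X, h0, Int.cast_zero]
  · -- degree ≥ 2 : use the Eisenstein construction
    have hd2' : 2 ≤ d := hd2
    have hmul : 2 * (N + 2) * m ≤ d - 1 := by
      rw [hm, mul_comm]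
      exact Nat.div_mul_le_self _ _
    have h4m : 4 * m ≤ 2 * (N + 2) * m := by
      have : (4 : ℕ) ≤ 2 * (N + 2) := by omega
      exact Nat.mul_le_mul_right m this
    have hkey : 2 * m + 2 ≤ d ∧ 2 * m ≤ (d - (2 * m + 2)) + 1 := by
      rcases Nat.eq_zero_or_pos m with h | h
      · omega
      · have h1 : 4 * m ≤ d - 1 := le_trans h4m hmul
        omega
    set s : ℕ := d - (2 * m + 2) with hs
    have hds : 2 * m + 2 + s = d := by omega
    refine ⟨LBC.f ℚ N m s, ?_, ?_, ?_⟩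
    · rw [LBC.totalDegree_f N m s hkey.2, hds]
    · rw [LBC.map_f (algebraMap ℚ (AlgebraicClosure ℚ)) N m s]
      exact LBC.irreducible_f (K := AlgebraicClosure ℚ) N m s
    · intro r hr
      exact LBC.eval_f_zero N m s r hr
end
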